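/- arXiv:1409.4950 — 3 statements merged into one kernel-verified Lean document; each statement's English description precedes it below -/
import Mathlib

section
/- Let K be a field and let W be the Weierstrass curve over K given by y² + a₁xy + a₃y = x³ + a₂x², with discriminant Δ ≠ 0 and a₃ ≠ 0. Let P = (0, 0), which is a K-rational point of W. Then P is not 2-torsion (i.e., 2P ≠ O in the group of K-points), and 3P = O if and only if a₂ = 0. -/
/-!
With `a₄ = a₆ = 0` the tangent to the curve at `P = (0, 0)` is the line `y = 0`, which meets the
curve again at `(-a₂, 0)`; hence `-2P = (-a₂, 0)` is an affine point, so `2P ≠ O`, and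
`3P = O` means `P = -2P`, i.e. `a₂ = 0`.
-/

namespace WeierstrassCurve.Affine

variable {F : Type*} [Field F] {W : Affine F}

lemma zero_ne_negY_zero_zero (h₃ : W.a₃ ≠ 0) : (0 : F) ≠ W.negY 0 0 := by
  simpa [negY, eq_comm] using h₃

variable [DecidableEq F]

lemma slope_zero_zero (h₄ : W.a₄ = 0) (h₃ : W.a₃ ≠ 0) : W.slope 0 0 0 0 = 0 := by
  rw [slope_of_Y_ne rfl (zero_ne_negY_zero_zero h₃)]
  simp [h₄]

lemma Point.neg_two_nsmul_some_zero_zero (h₄ : W.a₄ = 0) (h₃ : W.a₃ ≠ 0)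
    (hP : W.Nonsingular 0 0) : ∃ h, -(2 • some 0 0 hP) = some (-W.a₂) 0 h := by
  have hX : W.addX 0 0 (W.slope 0 0 0 0) = -W.a₂ := by simp [slope_zero_zero h₄ h₃, addX]
  have hY : W.negAddY 0 0 0 (W.slope 0 0 0 0) = 0 := by simp [slope_zero_zero h₄ h₃, negAddY]
  rw [two_nsmul, add_self_of_Y_ne' (zero_ne_negY_zero_zero h₃), neg_neg]
  generalize_proofs h
  exact ⟨by rwa [hX, hY] at h, by congr⟩

lemma Point.two_nsmul_some_zero_zero_ne_zero (h₄ : W.a₄ = 0) (h₃ : W.a₃ ≠ 0)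
    (hP : W.Nonsingular 0 0) : 2 • some 0 0 hP ≠ 0 := by
  obtain ⟨h, h2P⟩ := neg_two_nsmul_some_zero_zero h₄ h₃ hP
  rw [← neg_ne_zero, h2P]
  exact some_ne_zero h

lemma Point.three_nsmul_some_zero_zero_eq_zero_iff (h₄ : W.a₄ = 0) (h₃ : W.a₃ ≠ 0)
    (hP : W.Nonsingular 0 0) : 3 • some 0 0 hP = 0 ↔ W.a₂ = 0 := by
  obtain ⟨h, h2P⟩ := neg_two_nsmul_some_zero_zero h₄ h₃ hP
  rw [succ_nsmul', ← eq_neg_iff_add_eq_zero, h2P, some.injEq, zero_eq_neg, and_iff_left rfl]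

end WeierstrassCurve.Affine

open WeierstrassCurve.Affine WeierstrassCurve.Affine.Point

open Classical in
theorem zero_zero_point_torsion_general {K : Type*} [Field K] (a₁ a₂ a₃ : K)
    (ha₃ : a₃ ≠ 0) :
    (WeierstrassCurve.mk a₁ a₂ a₃ 0 0 : WeierstrassCurve K).toAffine.Nonsingular 0 0 ∧
    ∀ hP : (WeierstrassCurve.mk a₁ a₂ a₃ 0 0 : WeierstrassCurve K).toAffine.Nonsingular 0 0,
      (2 • WeierstrassCurve.Affine.Point.some 0 0 hP ≠ 0) ∧
      (3 • WeierstrassCurve.Affine.Point.some 0 0 hP = 0 ↔ a₂ = 0) :=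
  ⟨nonsingular_zero.mpr ⟨rfl, .inl ha₃⟩, fun hP =>
    ⟨two_nsmul_some_zero_zero_ne_zero rfl ha₃ hP, three_nsmul_some_zero_zero_eq_zero_iff rfl ha₃ hP⟩⟩

open Classical in
/-- For the Weierstrass curve `y² + a₁xy + a₃y = x³ + a₂x²` over
a field `K` with `Δ ≠ 0` and `a₃ ≠ 0`, the point `P = (0, 0)` is a K-rational
point, `P` is not 2-torsion, and `3P = O` if and only if `a₂ = 0`. -/
theorem zero_zero_point_torsion {K : Type*} [Field K] (a₁ a₂ a₃ : K)
    (hΔ : (WeierstrassCurve.mk a₁ a₂ a₃ 0 0 : WeierstrassCurve K).Δ ≠ 0)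
    (ha₃ : a₃ ≠ 0) :
    (WeierstrassCurve.mk a₁ a₂ a₃ 0 0 : WeierstrassCurve K).toAffine.Nonsingular 0 0 ∧
    ∀ hP : (WeierstrassCurve.mk a₁ a₂ a₃ 0 0 : WeierstrassCurve K).toAffine.Nonsingular 0 0,
      (2 • WeierstrassCurve.Affine.Point.some 0 0 hP ≠ 0) ∧
      (3 • WeierstrassCurve.Affine.Point.some 0 0 hP = 0 ↔ a₂ = 0) :=
  zero_zero_point_torsion_general a₁ a₂ a₃ ha₃
end

section
/- Let K = ℂ(t) be the field of rational functions in one variable t over ℂ. The Weierstrass curve S over K given by y² + xy + ty = x³ has nonzero discriminant, and the point P = (0, 0) has exact order 3 in the group S(K) of K-rational points; in particular {O, P, −P} is a subgroup of S(K) isomorphic to ℤ/3. -/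
/-!
On a curve `y² + a₁xy + a₃y = x³` with `a₃ ≠ 0`, the tangent line at `P = (0, 0)` is `y = 0`,
which meets the cubic with multiplicity three at `P`. So `P` is a flex, `2P = -P`, and `P` has
order `3`. For `S` one has `a₁ = 1`, `a₃ = t`, and `Δ = t³(1 - 27t) ≠ 0`.
-/

namespace AddSubgroup

variable {G : Type*} [AddGroup G] {g : G}

theorem coe_zmultiples_eq_of_addOrderOf_eq_three (hg : addOrderOf g = 3) :
    (zmultiples g : Set G) = {0, g, -g} := by
  have hfin : IsOfFinAddOrder g := addOrderOf_pos_iff.mp (by omega)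
  have htwo : 2 • g = -g := by
    have h3 : 3 • g = 0 := hg ▸ addOrderOf_nsmul_eq_zero g
    rw [succ_nsmul] at h3
    exact eq_neg_of_add_eq_zero_left h3
  classical
  rw [← hfin.multiples_eq_zmultiples, hfin.multiples_eq_image_range_addOrderOf, hg]
  ext x
  simp [Finset.range_add_one, htwo]
  tauto

theorem nonempty_zmultiples_addEquiv_zmod {n : ℕ} (hg : addOrderOf g = n) :
    Nonempty (zmultiples g ≃+ ZMod n) := by
  have hgen : ∀ x : zmultiples g, x ∈ zmultiples (⟨g, mem_zmultiples g⟩ : zmultiples g) := by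
    rintro ⟨_, k, rfl⟩
    exact ⟨k, rfl⟩
  exact ⟨(zmodAddEquivOfGenerator hgen ((Nat.card_zmultiples g).trans hg)).symm⟩

end AddSubgroup

namespace WeierstrassCurve

variable {R : Type*} [CommRing R]

theorem Δ_of_a₂_a₄_a₆_eq_zero (W : WeierstrassCurve R) (h₂ : W.a₂ = 0) (h₄ : W.a₄ = 0)
    (h₆ : W.a₆ = 0) :
    W.Δ = W.a₃ ^ 3 * (W.a₁ ^ 3 - 27 * W.a₃) := by
  simp only [Δ, b₂, b₄, b₆, b₈, h₂, h₄, h₆]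
  ring

namespace Affine

theorem nonsingular_zero_zero {W : Affine R} (h₆ : W.a₆ = 0) (h₃ : W.a₃ ≠ 0) :
    W.Nonsingular 0 0 := by
  rw [nonsingular_iff, equation_iff]
  exact ⟨by simp [h₆], Or.inr (by simpa [eq_comm] using h₃)⟩

namespace Point

variable {F : Type*} [Field F] [DecidableEq F] {W : Affine F}

theorem two_nsmul_some_zero_zero (h₂ : W.a₂ = 0) (h₃ : W.a₃ ≠ 0) (h₄ : W.a₄ = 0)
    (h : W.Nonsingular 0 0) :
    2 • some 0 0 h = -some 0 0 h := by
  have hy : (0 : F) ≠ W.negY 0 0 := by simpa [negY, eq_comm] using h₃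
  have hslope : W.slope 0 0 0 0 = 0 := by simp [slope_of_Y_ne rfl hy, h₄]
  rw [two_nsmul, add_self_of_Y_ne hy, neg_some, some.injEq]
  simp [hslope, addX, addY, negAddY, negY, h₂]

theorem addOrderOf_some_zero_zero (h₂ : W.a₂ = 0) (h₃ : W.a₃ ≠ 0) (h₄ : W.a₄ = 0)
    (h : W.Nonsingular 0 0) :
    addOrderOf (some 0 0 h) = 3 := by
  refine addOrderOf_eq_prime ?_ (some_ne_zero h)
  rw [succ_nsmul, two_nsmul_some_zero_zero h₂ h₃ h₄ h, neg_add_cancel]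

end Point

end Affine

end WeierstrassCurve

open Polynomial in
theorem RatFunc.one_sub_C_mul_X_ne_zero {K : Type*} [Field K] (c : K) :
    (1 : RatFunc K) - RatFunc.C c * RatFunc.X ≠ 0 := by
  have hpoly : (1 - Polynomial.C c * Polynomial.X : K[X]) ≠ 0 := fun h => by
    simpa using congrArg (coeff · 0) h
  simpa [← RatFunc.algebraMap_C, ← RatFunc.algebraMap_X] using
    RatFunc.algebraMap_ne_zero hpoly

open Classical in
/-- Over `K = ℂ(t)`, the Weierstrass curve
`S : y² + xy + ty = x³` has nonzero discriminant, and `P = (0, 0)` has exact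
order `3` in `S(K)`; in particular the subgroup `{O, P, −P}` generated by `P`
is isomorphic to `ℤ/3`. -/
theorem beauville_9111_mordell_weil_first :
    (WeierstrassCurve.mk 1 0 RatFunc.X 0 0 : WeierstrassCurve (RatFunc ℂ)).Δ ≠ 0 ∧
    (WeierstrassCurve.mk 1 0 RatFunc.X 0 0 :
      WeierstrassCurve (RatFunc ℂ)).toAffine.Nonsingular 0 0 ∧
    ∀ hP : (WeierstrassCurve.mk 1 0 RatFunc.X 0 0 :
        WeierstrassCurve (RatFunc ℂ)).toAffine.Nonsingular 0 0,
      addOrderOf (WeierstrassCurve.Affine.Point.some 0 0 hP) = 3 ∧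
      ((AddSubgroup.zmultiples (WeierstrassCurve.Affine.Point.some 0 0 hP) : Set _) =
        {0, WeierstrassCurve.Affine.Point.some 0 0 hP,
          -WeierstrassCurve.Affine.Point.some 0 0 hP}) ∧
      Nonempty
        (AddSubgroup.zmultiples (WeierstrassCurve.Affine.Point.some 0 0 hP) ≃+ ZMod 3) := by
  open WeierstrassCurve in
  have hX : (RatFunc.X : RatFunc ℂ) ≠ 0 := RatFunc.X_ne_zero
  refine ⟨?_, Affine.nonsingular_zero_zero rfl hX, fun hP => ?_⟩
  · rw [Δ_of_a₂_a₄_a₆_eq_zero _ rfl rfl rfl]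
    simpa [hX, map_ofNat] using RatFunc.one_sub_C_mul_X_ne_zero (27 : ℂ)
  · have h3 := Affine.Point.addOrderOf_some_zero_zero rfl hX rfl hP
    exact ⟨h3, AddSubgroup.coe_zmultiples_eq_of_addOrderOf_eq_three h3,
      AddSubgroup.nonempty_zmultiples_addEquiv_zmod h3⟩
end

section
/- Let K = ℂ(t) be the field of rational functions in one variable t over ℂ. The Weierstrass curve S' over K given by y² + ty = x³ has nonzero discriminant, and the point P = (0, 0) has exact order 3 in the group S'(K) of K-rational points; in particular {O, P, −P} is a subgroup of S'(K) isomorphic to ℤ/3. -/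
/-!
On `y² + ay = x³` with `a ≠ 0` the tangent line at `P = (0, 0)` is `y = 0`, which meets the curve
only at `P` (triply, as `x³ = 0`). Hence `P` is a flex, so `2P = -P` and `P` has order `3`.
-/

section AddGroup

variable {G : Type*} [AddGroup G] {g : G}

theorem addOrderOf_eq_three_of_add_self_eq_neg (h : g + g = -g) (hg : g ≠ 0) :
    addOrderOf g = 3 := by
  have : Fact (Nat.Prime 3) := ⟨Nat.prime_three⟩
  refine addOrderOf_eq_prime ?_ hg
  rw [succ_nsmul, two_nsmul, h, neg_add_cancel]

theorem coe_zmultiples_eq_of_addOrderOf_eq_three (h : addOrderOf g = 3) :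
    (AddSubgroup.zmultiples g : Set G) = {0, g, -g} := by
  have h3 : (3 : ℤ) • g = 0 := by
    rw [show (3 : ℤ) = (addOrderOf g : ℤ) by rw [h]; rfl, natCast_zsmul, addOrderOf_nsmul_eq_zero]
  ext x
  simp only [SetLike.mem_coe, AddSubgroup.mem_zmultiples_iff, Set.mem_insert_iff,
    Set.mem_singleton_iff]
  constructor
  · rintro ⟨k, rfl⟩
    rw [← mod_addOrderOf_zsmul, h]
    have : k % (3 : ℕ) = 0 ∨ k % (3 : ℕ) = 1 ∨ k % (3 : ℕ) = 2 := by omega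
    rcases this with hk | hk | hk <;> rw [hk]
    · simp
    · simp
    · right; right
      rw [eq_neg_iff_add_eq_zero, ← add_one_zsmul]
      exact h3
  · rintro (hx | hx | hx) <;> rw [hx]
    exacts [⟨0, zero_zsmul g⟩, ⟨1, one_zsmul g⟩, ⟨-1, neg_one_zsmul g⟩]

theorem nonempty_zmultiples_addEquiv_zmod {n : ℕ} (h : addOrderOf g = n) :
    Nonempty (AddSubgroup.zmultiples g ≃+ ZMod n) :=
  ⟨(Nat.card_zmultiples g).trans h ▸ (zmodAddCyclicAddEquiv inferInstance).symm⟩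

end AddGroup

namespace WeierstrassCurve

theorem Δ_mk_zero_zero_a₃_zero_zero {R : Type*} [CommRing R] (a : R) :
    (WeierstrassCurve.mk 0 0 a 0 0 : WeierstrassCurve R).Δ = -27 * a ^ 4 := by
  simp only [Δ, b₂, b₄, b₆, b₈]
  ring

variable {F : Type*} [Field F] {a : F}

theorem Affine.nonsingular_zero_zero_mk_iff :
    (WeierstrassCurve.mk 0 0 a 0 0 : WeierstrassCurve F).toAffine.Nonsingular 0 0 ↔ a ≠ 0 := by
  simp

theorem Affine.Point.addOrderOf_some_zero_zero_mk [DecidableEq F]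
    (h : (WeierstrassCurve.mk 0 0 a 0 0 : WeierstrassCurve F).toAffine.Nonsingular 0 0) :
    addOrderOf (Point.some _ _ h) = 3 := by
  have hy : (0 : F) ≠ (WeierstrassCurve.mk 0 0 a 0 0 : WeierstrassCurve F).toAffine.negY 0 0 := by
    simp [negY, nonsingular_zero_zero_mk_iff.1 h]
  have h2 : Point.some _ _ h + Point.some _ _ h = -Point.some _ _ h := by
    rw [add_self_of_Y_ne' hy, neg_inj]
    simp [slope_of_Y_ne rfl hy, negAddY, addX]
  exact addOrderOf_eq_three_of_add_self_eq_neg h2 (some_ne_zero h)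

end WeierstrassCurve

open Classical in
/-- Over `K = ℂ(t)`, the Weierstrass curve
`S' : y² + ty = x³` has nonzero discriminant, and `P = (0, 0)` has exact
order `3` in `S'(K)`; in particular the subgroup `{O, P, −P}` generated by `P`
is isomorphic to `ℤ/3`. -/
theorem beauville_9111_mordell_weil_second :
    (WeierstrassCurve.mk 0 0 RatFunc.X 0 0 : WeierstrassCurve (RatFunc ℂ)).Δ ≠ 0 ∧
    (WeierstrassCurve.mk 0 0 RatFunc.X 0 0 :
      WeierstrassCurve (RatFunc ℂ)).toAffine.Nonsingular 0 0 ∧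
    ∀ hP : (WeierstrassCurve.mk 0 0 RatFunc.X 0 0 :
        WeierstrassCurve (RatFunc ℂ)).toAffine.Nonsingular 0 0,
      addOrderOf (WeierstrassCurve.Affine.Point.some _ _ hP) = 3 ∧
      ((AddSubgroup.zmultiples (WeierstrassCurve.Affine.Point.some _ _ hP) : Set _) =
        {0, WeierstrassCurve.Affine.Point.some _ _ hP,
          -WeierstrassCurve.Affine.Point.some _ _ hP}) ∧
      Nonempty
        (AddSubgroup.zmultiples (WeierstrassCurve.Affine.Point.some _ _ hP) ≃+ ZMod 3) := by
  have hX : (RatFunc.X : RatFunc ℂ) ≠ 0 := RatFunc.X_ne_zero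
  refine ⟨?_, WeierstrassCurve.Affine.nonsingular_zero_zero_mk_iff.2 hX, fun hP => ?_⟩
  · rw [WeierstrassCurve.Δ_mk_zero_zero_a₃_zero_zero]
    exact mul_ne_zero (by norm_num) (pow_ne_zero _ hX)
  have hord := WeierstrassCurve.Affine.Point.addOrderOf_some_zero_zero_mk hP
  exact ⟨hord, coe_zmultiples_eq_of_addOrderOf_eq_three hord,
    nonempty_zmultiples_addEquiv_zmod hord⟩
end
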